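/- arXiv:1905.07498 — 2 statements merged into one kernel-verified Lean document; each statement's English description precedes it below -/
import Mathlib

section
/- (Proposition 1.) Let K be the boxcar kernel and ν > 0, so that h_ν(x) = 1/(2ν) for |x| ≤ ν and 0 otherwise. Then σ ↦ V_ν(0,σ) is increasing on the interval (0, (Φ⁻¹(3/4))⁻¹·ν]: for all σ₁, σ₂ with 0 < σ₁ ≤ σ₂ and Φ(ν/σ₂) ≥ 3/4 (equivalently σ₂ ≤ (Φ⁻¹(3/4))⁻¹·ν ≈ 1.48·ν), one has V_ν(0,σ₁) ≤ V_ν(0,σ₂). -/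
open MeasureTheory ProbabilityTheory Real Filter

/-- The boxcar kernel: `K(x) = 1/2` for `|x| ≤ 1`, 0 otherwise. -/
noncomputable def boxcar (x : ℝ) : ℝ := if |x| ≤ 1 then 1 / 2 else 0

/-- The short-exposure PSF `h_ν(x) = (1/ν) K(x/ν)`. -/
noncomputable def shortPSF (K : ℝ → ℝ) (ν : ℝ) (x : ℝ) : ℝ := (1 / ν) * K (x / ν)

/-- `V_ν(x,σ) = Var[h_ν(x-Θ)] = E[h_ν(x-Θ)²] − (E[h_ν(x-Θ)])²` where `Θ ~ N(0,σ²)`. -/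
noncomputable def Vnu (K : ℝ → ℝ) (ν σ x : ℝ) : ℝ :=
  (∫ θ, (shortPSF K ν (x - θ)) ^ 2 ∂(gaussianReal 0 (σ ^ 2).toNNReal))
    - (∫ θ, shortPSF K ν (x - θ) ∂(gaussianReal 0 (σ ^ 2).toNNReal)) ^ 2

/-- `Φ`, the standard normal CDF. -/
noncomputable def stdNormalCDF (x : ℝ) : ℝ := ProbabilityTheory.cdf (gaussianReal 0 1) x
/-! With `p = P(|Θ| ≤ ν)`, the PSF `h_ν(-Θ)` is `1/(2ν)` times a Bernoulli(`p`) variable, so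
`V_ν(0,σ) = p(1-p)/(4ν²)`. By scaling and symmetry of the Gaussian, `p = 2Φ(ν/σ) - 1`, which
decreases in `σ`; the hypothesis `Φ(ν/σ₂) ≥ 3/4` says `p ≥ 1/2` at `σ₂` (hence at `σ₁`), and
`t ↦ t(1-t)` decreases on `[1/2, ∞)`. -/

open Set

instance gaussianReal_zero_isNegInvariant (v : NNReal) : (gaussianReal 0 v).IsNegInvariant :=
  ⟨by simpa [Measure.neg_def] using gaussianReal_map_neg (μ := 0) (v := v)⟩

lemma measureReal_Icc_neg_self_eq_two_mul_cdf_sub_one {μ : Measure ℝ} [IsProbabilityMeasure μ]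
    [μ.IsNegInvariant] {c : ℝ} (hc : 0 ≤ c) : μ.real (Icc (-c) c) = 2 * cdf μ c - 1 := by
  have hleft : μ.real (Iio (-c)) = 1 - cdf μ c := by
    rw [← neg_Ioi, measureReal_def, Measure.measure_neg, ← measureReal_def, ← compl_Iic,
      measureReal_compl measurableSet_Iic, cdf_eq_real, probReal_univ]
  have hsplit : μ.real (Iic c) = μ.real (Iio (-c)) + μ.real (Icc (-c) c) := by
    rw [← Iio_union_Icc_eq_Iic (a := -c) (by linarith),
      measureReal_union ((Iio_disjoint_Ici le_rfl).mono_right Icc_subset_Ici_self)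
        measurableSet_Icc]
  rw [cdf_eq_real] at hleft ⊢
  linarith

lemma gaussianReal_zero_sq_eq_map (σ : ℝ) :
    gaussianReal 0 (σ ^ 2).toNNReal = (gaussianReal 0 1).map (σ * ·) := by
  rw [gaussianReal_map_const_mul]
  congr 1
  · ring
  · ext
    simp [Real.coe_toNNReal _ (sq_nonneg σ)]

lemma cdf_gaussianReal_zero_sq {σ : ℝ} (hσ : 0 < σ) (x : ℝ) :
    cdf (gaussianReal 0 (σ ^ 2).toNNReal) x = stdNormalCDF (x / σ) := by
  rw [stdNormalCDF, cdf_eq_real, cdf_eq_real, gaussianReal_zero_sq_eq_map,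
    map_measureReal_apply (measurable_const_mul σ) measurableSet_Iic, preimage_const_mul_Iic₀ _ hσ]

lemma shortPSF_boxcar_sub {ν : ℝ} (hν : 0 < ν) (x θ : ℝ) :
    shortPSF boxcar ν (x - θ) = (Icc (x - ν) (x + ν)).indicator (fun _ => (2 * ν)⁻¹) θ := by
  have hmem : |(x - θ) / ν| ≤ 1 ↔ θ ∈ Icc (x - ν) (x + ν) := by
    rw [abs_div, abs_of_pos hν, div_le_one hν, abs_le, mem_Icc]
    constructor <;> rintro ⟨h₁, h₂⟩ <;> constructor <;> linarith
  by_cases h : θ ∈ Icc (x - ν) (x + ν)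
  · rw [shortPSF, boxcar, if_pos (hmem.2 h), indicator_of_mem h]; ring
  · rw [shortPSF, boxcar, if_neg (mt hmem.1 h), indicator_of_notMem h, mul_zero]

lemma Vnu_boxcar {ν : ℝ} (hν : 0 < ν) (σ x : ℝ) :
    Vnu boxcar ν σ x =
      (gaussianReal 0 (σ ^ 2).toNNReal).real (Icc (x - ν) (x + ν)) *
        (1 - (gaussianReal 0 (σ ^ 2).toNNReal).real (Icc (x - ν) (x + ν))) / (4 * ν ^ 2) := by
  have hsq : (fun θ => shortPSF boxcar ν (x - θ) ^ 2) =
      (Icc (x - ν) (x + ν)).indicator (fun _ => ((2 * ν)⁻¹) ^ 2) := by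
    simp_rw [shortPSF_boxcar_sub hν]
    exact (indicator_comp_of_zero (g := (· ^ 2)) (zero_pow two_ne_zero)).symm
  rw [Vnu, hsq, funext (shortPSF_boxcar_sub hν x), integral_indicator_const _ measurableSet_Icc,
    integral_indicator_const _ measurableSet_Icc, smul_eq_mul, smul_eq_mul]
  field_simp
  ring

lemma antitoneOn_mul_one_sub : AntitoneOn (fun t : ℝ => t * (1 - t)) (Ici (1 / 2)) := by
  intro a ha b _ hab
  simp only [mem_Ici] at ha
  nlinarith

lemma Vnu_boxcar_zero {ν σ : ℝ} (hν : 0 < ν) (hσ : 0 < σ) :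
    Vnu boxcar ν σ 0 =
      (2 * stdNormalCDF (ν / σ) - 1) * (1 - (2 * stdNormalCDF (ν / σ) - 1)) / (4 * ν ^ 2) := by
  rw [Vnu_boxcar hν, zero_sub, zero_add,
    measureReal_Icc_neg_self_eq_two_mul_cdf_sub_one hν.le, cdf_gaussianReal_zero_sq hσ]

theorem boxcar_variance_increasing
    (ν : ℝ) (hν : 0 < ν) (σ₁ σ₂ : ℝ) (hσ₁ : 0 < σ₁) (h12 : σ₁ ≤ σ₂)
    (hσ₂ : (3 : ℝ) / 4 ≤ stdNormalCDF (ν / σ₂)) :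
    Vnu boxcar ν σ₁ 0 ≤ Vnu boxcar ν σ₂ 0 := by
  rw [Vnu_boxcar_zero hν hσ₁, Vnu_boxcar_zero hν (hσ₁.trans_le h12)]
  have hΦ : stdNormalCDF (ν / σ₂) ≤ stdNormalCDF (ν / σ₁) :=
    monotone_cdf _ (div_le_div_of_nonneg_left hν.le hσ₁ h12)
  gcongr ?_ / _
  exact antitoneOn_mul_one_sub (mem_Ici.2 (by linarith)) (mem_Ici.2 (by linarith)) (by linarith)
end

section
/- Let K : ℝ → ℝ be a smoothing kernel with bound M, let ν > 0, and set h_ν(x) = (1/ν)·K(x/ν). Assume h_ν is continuous on ℝ with compact support. Then sup_{x ∈ ℝ} V_ν(x,σ) → 0 as σ → ∞. -/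
open MeasureTheory ProbabilityTheory Real Filter
open scoped ENNReal NNReal

/-!
The Gaussian density of variance `σ²` is bounded by `1 / (√(2π) σ)`, so for `Θ ~ N(0, σ²)` the
second moment `E[h(x - Θ)²]`, and with it the variance, is at most `‖h‖₂² / (√(2π) σ)` uniformly
in `x`. A continuous compactly supported `h` is square integrable, and the bound tends to `0`.
-/

namespace ProbabilityTheory

lemma gaussianPDFReal_le_inv_sqrt (m : ℝ) (v : ℝ≥0) (x : ℝ) :
    gaussianPDFReal m v x ≤ (√(2 * π * v))⁻¹ := by
  rw [gaussianPDFReal]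
  refine mul_le_of_le_one_right (by positivity) (exp_le_one_iff.mpr ?_)
  exact div_nonpos_of_nonpos_of_nonneg (neg_nonpos.mpr (sq_nonneg _)) (by positivity)

lemma integral_gaussianReal_le_of_nonneg {g : ℝ → ℝ} (hg0 : ∀ y, 0 ≤ g y) (hg : Integrable g)
    (m : ℝ) {v : ℝ≥0} (hv : v ≠ 0) :
    ∫ y, g y ∂gaussianReal m v ≤ (√(2 * π * v))⁻¹ * ∫ y, g y := by
  rw [integral_gaussianReal_eq_integral_smul hv, ← integral_const_mul]
  refine integral_mono_of_nonneg (ae_of_all _ fun y => ?_) (hg.const_mul _)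
    (ae_of_all _ fun y => ?_)
  · exact smul_nonneg (gaussianPDFReal_nonneg m v y) (hg0 y)
  · exact mul_le_mul_of_nonneg_right (gaussianPDFReal_le_inv_sqrt m v y) (hg0 y)

end ProbabilityTheory

lemma integral_sq_sub_sq_integral_nonneg {Ω : Type*} [MeasurableSpace Ω] {μ : Measure Ω}
    [IsProbabilityMeasure μ] {X : Ω → ℝ} (hX : MemLp X 2 μ) :
    0 ≤ (∫ ω, X ω ^ 2 ∂μ) - (∫ ω, X ω ∂μ) ^ 2 := by
  simpa [variance_eq_sub hX] using variance_nonneg X μ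

lemma Continuous.memLp_comp_sub_of_hasCompactSupport {f : ℝ → ℝ} (hf : Continuous f)
    (hsupp : HasCompactSupport f) (x : ℝ) (μ : Measure ℝ) [IsFiniteMeasure μ] (p : ℝ≥0∞) :
    MemLp (fun θ => f (x - θ)) p μ := by
  obtain ⟨C, hC⟩ := hf.bounded_above_of_compact_support hsupp
  exact .of_bound (hf.comp (continuous_sub_left x)).aestronglyMeasurable C
    (ae_of_all _ fun θ => hC (x - θ))

section Vnu

variable {K : ℝ → ℝ} {ν : ℝ}

lemma Vnu_nonneg (hcont : Continuous (shortPSF K ν)) (hsupp : HasCompactSupport (shortPSF K ν))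
    (σ x : ℝ) : 0 ≤ Vnu K ν σ x :=
  integral_sq_sub_sq_integral_nonneg (hcont.memLp_comp_sub_of_hasCompactSupport hsupp x _ 2)

lemma Vnu_le (hcont : Continuous (shortPSF K ν)) (hsupp : HasCompactSupport (shortPSF K ν))
    {σ : ℝ} (hσ : 0 < σ) (x : ℝ) :
    Vnu K ν σ x ≤ (∫ y, shortPSF K ν y ^ 2) / (√(2 * π) * σ) := by
  have hsupp_sq : HasCompactSupport fun y => shortPSF K ν y ^ 2 :=
    hsupp.comp_left (g := fun t : ℝ => t ^ 2) (zero_pow two_ne_zero)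
  have hsq : Integrable fun y => shortPSF K ν y ^ 2 :=
    (hcont.pow 2).integrable_of_hasCompactSupport hsupp_sq
  have hv : (σ ^ 2).toNNReal ≠ 0 := by simpa using hσ.ne'
  have hsqrt : √(2 * π * ((σ ^ 2).toNNReal : ℝ)) = √(2 * π) * σ := by
    rw [Real.coe_toNNReal _ (sq_nonneg σ), sqrt_mul (by positivity), sqrt_sq hσ.le]
  calc Vnu K ν σ x
      ≤ ∫ θ, shortPSF K ν (x - θ) ^ 2 ∂gaussianReal 0 (σ ^ 2).toNNReal :=
        sub_le_self _ (sq_nonneg _)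
    _ ≤ (√(2 * π * ((σ ^ 2).toNNReal : ℝ)))⁻¹ * ∫ θ, shortPSF K ν (x - θ) ^ 2 :=
        integral_gaussianReal_le_of_nonneg (fun _ => sq_nonneg _) (hsq.comp_sub_left x) 0 hv
    _ = (∫ y, shortPSF K ν y ^ 2) / (√(2 * π) * σ) := by
        rw [integral_sub_left_eq_self (fun y => shortPSF K ν y ^ 2) volume x, hsqrt,
          inv_mul_eq_div]

end Vnu

theorem supVar_tendsto_zero_atTop_of_compactSupport_general
    (K : ℝ → ℝ) (ν : ℝ)
    (hcont : Continuous (shortPSF K ν)) (hsupp : HasCompactSupport (shortPSF K ν)) :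
    Filter.Tendsto (fun σ : ℝ => ⨆ x : ℝ, Vnu K ν σ x) Filter.atTop (nhds 0) := by
  have hbound : Tendsto (fun σ => (∫ y, shortPSF K ν y ^ 2) / (√(2 * π) * σ)) atTop (nhds 0) :=
    tendsto_const_nhds.div_atTop (tendsto_id.const_mul_atTop (by positivity))
  refine tendsto_of_tendsto_of_tendsto_of_le_of_le' tendsto_const_nhds hbound ?_ ?_
  · exact Eventually.of_forall fun σ => Real.iSup_nonneg (Vnu_nonneg hcont hsupp σ)
  · filter_upwards [eventually_gt_atTop 0] with σ hσ
    exact ciSup_le (Vnu_le hcont hsupp hσ)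

theorem supVar_tendsto_zero_atTop_of_compactSupport
    (K : ℝ → ℝ) (M ν : ℝ) (hν : 0 < ν)
    (hK0 : ∀ x, 0 ≤ K x) (hKM : ∀ x, K x ≤ M)
    (hKeven : ∀ x, K (-x) = K x) (hKint : Integrable K)
    (hcont : Continuous (shortPSF K ν)) (hsupp : HasCompactSupport (shortPSF K ν)) :
    Filter.Tendsto (fun σ : ℝ => ⨆ x : ℝ, Vnu K ν σ x) Filter.atTop (nhds 0) :=
  supVar_tendsto_zero_atTop_of_compactSupport_general K ν hcont hsupp
end
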